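/- arXiv:math/0404175 — 6 statements merged into one kernel-verified Lean document; each statement's English description precedes it below -/
import Mathlib

section
/- (Micchelli's Lemma) Let x₁,…,xₙ ∈ ℝ^d and c₁,…,cₙ ∈ ℝ satisfy ∑ᵢ cᵢ p(xᵢ) = 0 for all polynomials p of total degree < k. Then (−1)^k ∑ᵢ ∑ⱼ cᵢcⱼ ‖xᵢ−xⱼ‖^(2k) ≥ 0. -/
open MvPolynomial Finset
open scoped RealInnerProductSpace Matrix

/-!
Expanding `‖xᵢ - xⱼ‖² = ‖xᵢ‖² + ‖xⱼ‖² - 2⟪xᵢ, xⱼ⟫` to the `k`-th power gives terms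
`‖xᵢ‖^(2a) ‖xⱼ‖^(2b) ⟪xᵢ, xⱼ⟫^m` with `a + b + m = k`. Such a term is a polynomial of degree
`2a + m` in `xᵢ` and `2b + m` in `xⱼ`; these degrees add up to `2k`, so unless `a = b` one of them
is below `k` and summing against `c` kills the term. The surviving terms carry the sign `(-1)^k`
and are nonnegative because `⟪xᵢ, xⱼ⟫^m` is a positive semidefinite kernel (Schur product
theorem).
-/

section InnerProductSpace

variable {E : Type*} [NormedAddCommGroup E] [InnerProductSpace ℝ E] {ι : Type*} [Fintype ι]

theorem Matrix.posSemidef_of_inner_pow (v : ι → E) (m : ℕ) :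
    (Matrix.of fun i j => ⟪v i, v j⟫ ^ m).PosSemidef := by
  induction m with
  | zero =>
    have hone : Matrix.gram ℝ (fun _ : ι => (1 : ℝ)) = Matrix.of fun _ _ => 1 := by
      ext; simp [Matrix.gram_apply]
    simpa [hone] using Matrix.posSemidef_gram ℝ fun _ : ι => (1 : ℝ)
  | succ m ih =>
    have hsucc : (Matrix.of fun i j => ⟪v i, v j⟫ ^ (m + 1)) =
        (Matrix.of fun i j => ⟪v i, v j⟫ ^ m) ⊙ Matrix.gram ℝ v := by
      ext; simp [Matrix.gram_apply, pow_succ]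
    rw [hsucc]
    exact ih.hadamard (Matrix.posSemidef_gram ℝ v)

theorem sum_sum_mul_inner_pow_nonneg (b : ι → ℝ) (v : ι → E) (m : ℕ) :
    0 ≤ ∑ i, ∑ j, b i * b j * ⟪v i, v j⟫ ^ m := by
  have := (Matrix.posSemidef_of_inner_pow v m).dotProduct_mulVec_nonneg b
  simp only [star_trivial, dotProduct, Matrix.mulVec, Matrix.of_apply, Finset.mul_sum] at this
  exact this.trans_eq (sum_congr rfl fun i _ => sum_congr rfl fun j _ => by ring)

theorem neg_one_pow_mul_norm_sub_pow_eq_sum (u w : E) (k : ℕ) :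
    (-1) ^ k * ‖u - w‖ ^ (2 * k) = ∑ e ∈ range (k + 1), ∑ a ∈ range (e + 1),
      k.choose e * e.choose a * 2 ^ (k - e) *
        ((-1) ^ e * (‖u‖ ^ (2 * a) * ‖w‖ ^ (2 * (e - a)) * ⟪u, w⟫ ^ (k - e))) := by
  have hsq : -‖u - w‖ ^ 2 = -(‖u‖ ^ 2 + ‖w‖ ^ 2) + 2 * ⟪u, w⟫ := by
    rw [norm_sub_sq_real]; ring
  rw [pow_mul, ← mul_pow, neg_one_mul, hsq, add_pow]
  refine sum_congr rfl fun e _ => ?_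
  rw [neg_pow, add_pow, mul_sum, sum_mul, sum_mul]
  refine sum_congr rfl fun a _ => ?_
  simp only [pow_mul]
  ring

theorem neg_one_pow_mul_sum_sum_expansion_term_nonneg {x : ι → E} {c : ι → ℝ} {k : ℕ}
    (h : ∀ (y : E) (a m : ℕ), 2 * a + m < k → ∑ i, c i * (‖x i‖ ^ (2 * a) * ⟪x i, y⟫ ^ m) = 0)
    {e a : ℕ} (hae : a ≤ e) (hek : e ≤ k) :
    0 ≤ (-1) ^ e * ∑ i, ∑ j, c i * c j *
      (‖x i‖ ^ (2 * a) * ‖x j‖ ^ (2 * (e - a)) * ⟪x i, x j⟫ ^ (k - e)) := by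
  rcases lt_trichotomy (2 * a) e with hlt | rfl | hgt
  · rw [sum_comm, sum_eq_zero fun j _ => ?_, mul_zero]
    calc ∑ i, c i * c j * (‖x i‖ ^ (2 * a) * ‖x j‖ ^ (2 * (e - a)) * ⟪x i, x j⟫ ^ (k - e))
        = c j * ‖x j‖ ^ (2 * (e - a)) * ∑ i, c i * (‖x i‖ ^ (2 * a) * ⟪x i, x j⟫ ^ (k - e)) := by
          rw [mul_sum]; exact sum_congr rfl fun i _ => by ring
      _ = 0 := by rw [h _ _ _ (by omega), mul_zero]
  · rw [show (-1 : ℝ) ^ (2 * a) = 1 by simp [pow_mul], one_mul, two_mul a, Nat.add_sub_cancel]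
    refine (sum_sum_mul_inner_pow_nonneg (fun i => c i * ‖x i‖ ^ (2 * a)) x (k - (a + a))).trans_eq
      (sum_congr rfl fun i _ => sum_congr rfl fun j _ => by ring)
  · rw [sum_eq_zero fun i _ => ?_, mul_zero]
    calc ∑ j, c i * c j * (‖x i‖ ^ (2 * a) * ‖x j‖ ^ (2 * (e - a)) * ⟪x i, x j⟫ ^ (k - e))
        = c i * ‖x i‖ ^ (2 * a) * ∑ j, c j * (‖x j‖ ^ (2 * (e - a)) * ⟪x j, x i⟫ ^ (k - e)) := by
          rw [mul_sum]; exact sum_congr rfl fun j _ => by rw [real_inner_comm]; ring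
      _ = 0 := by rw [h _ _ _ (by omega), mul_zero]

theorem neg_one_pow_mul_sum_sum_norm_sub_pow_nonneg {x : ι → E} {c : ι → ℝ} {k : ℕ}
    (h : ∀ (y : E) (a m : ℕ), 2 * a + m < k → ∑ i, c i * (‖x i‖ ^ (2 * a) * ⟪x i, y⟫ ^ m) = 0) :
    0 ≤ (-1) ^ k * ∑ i, ∑ j, c i * c j * ‖x i - x j‖ ^ (2 * k) := by
  calc (0 : ℝ)
      ≤ ∑ e ∈ range (k + 1), ∑ a ∈ range (e + 1), k.choose e * e.choose a * 2 ^ (k - e) *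
          ((-1) ^ e * ∑ i, ∑ j, c i * c j *
            (‖x i‖ ^ (2 * a) * ‖x j‖ ^ (2 * (e - a)) * ⟪x i, x j⟫ ^ (k - e))) := by
        refine sum_nonneg fun e he => sum_nonneg fun a ha => mul_nonneg (by positivity) ?_
        rw [mem_range] at he ha
        exact neg_one_pow_mul_sum_sum_expansion_term_nonneg h (by omega) (by omega)
    _ = ∑ i, ∑ j, c i * c j * ((-1) ^ k * ‖x i - x j‖ ^ (2 * k)) := by
        simp_rw [neg_one_pow_mul_norm_sub_pow_eq_sum, mul_sum]
        simp only [sum_comm (s := range _)]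
        exact sum_congr rfl fun _ _ => sum_congr rfl fun _ _ => sum_congr rfl fun _ _ =>
          sum_congr rfl fun _ _ => by ring
    _ = (-1) ^ k * ∑ i, ∑ j, c i * c j * ‖x i - x j‖ ^ (2 * k) := by
        simp_rw [mul_sum]
        exact sum_congr rfl fun i _ => sum_congr rfl fun j _ => by ring

end InnerProductSpace

section Polynomial

variable {d : ℕ}

theorem eval_sum_X_sq (x : EuclideanSpace ℝ (Fin d)) :
    eval x (∑ l, X l ^ 2 : MvPolynomial (Fin d) ℝ) = ‖x‖ ^ 2 := by
  simp [EuclideanSpace.norm_sq_eq]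

theorem eval_sum_C_mul_X (x y : EuclideanSpace ℝ (Fin d)) :
    eval x (∑ l, C (y l) * X l : MvPolynomial (Fin d) ℝ) = ⟪x, y⟫ := by
  simp [PiLp.inner_apply, mul_comm]

theorem totalDegree_sum_X_sq_le : (∑ l, X l ^ 2 : MvPolynomial (Fin d) ℝ).totalDegree ≤ 2 :=
  totalDegree_finsetSum_le fun l _ => (totalDegree_pow _ _).trans (by simp [totalDegree_X])

theorem totalDegree_sum_C_mul_X_le (y : Fin d → ℝ) :
    (∑ l, C (y l) * X l : MvPolynomial (Fin d) ℝ).totalDegree ≤ 1 :=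
  totalDegree_finsetSum_le fun l _ => (totalDegree_mul _ _).trans (by simp [totalDegree_X])

theorem sum_mul_norm_pow_mul_inner_pow_eq_zero {n k : ℕ} {x : Fin n → EuclideanSpace ℝ (Fin d)}
    {c : Fin n → ℝ}
    (h : ∀ p : MvPolynomial (Fin d) ℝ, p.totalDegree < k → ∑ i, c i * eval (x i) p = 0)
    (y : EuclideanSpace ℝ (Fin d)) {a m : ℕ} (ham : 2 * a + m < k) :
    ∑ i, c i * (‖x i‖ ^ (2 * a) * ⟪x i, y⟫ ^ m) = 0 := by
  have hdeg : ((∑ l, X l ^ 2) ^ a * (∑ l, C (y l) * X l) ^ m : MvPolynomial (Fin d) ℝ).totalDegree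
      < k := by
    refine lt_of_le_of_lt ((totalDegree_mul _ _).trans (add_le_add ?_ ?_)) ham
    · refine (totalDegree_pow _ _).trans ?_
      rw [mul_comm 2 a]
      exact Nat.mul_le_mul_left a totalDegree_sum_X_sq_le
    · refine (totalDegree_pow _ _).trans ?_
      simpa using Nat.mul_le_mul_left m (totalDegree_sum_C_mul_X_le _)
  rw [← h _ hdeg]
  simp only [map_mul, map_pow, eval_sum_X_sq, eval_sum_C_mul_X, pow_mul]

end Polynomial

/-- Micchelli's Lemma: if `∑ᵢ cᵢ p(xᵢ) = 0` for all polynomials `p` of total degree `< k`,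
then `(−1)^k ∑ᵢ∑ⱼ cᵢcⱼ ‖xᵢ−xⱼ‖^(2k) ≥ 0`. -/
theorem micchelli_lemma (d n k : ℕ) (x : Fin n → EuclideanSpace ℝ (Fin d)) (c : Fin n → ℝ)
    (h : ∀ p : MvPolynomial (Fin d) ℝ, p.totalDegree < k →
      ∑ i, c i * MvPolynomial.eval (x i) p = 0) :
    0 ≤ (-1 : ℝ) ^ k * ∑ i, ∑ j, c i * c j * ‖x i - x j‖ ^ (2 * k) :=
  neg_one_pow_mul_sum_sum_norm_sub_pow_nonneg fun y _ _ ham =>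
    sum_mul_norm_pow_mul_inner_pow_eq_zero h y ham
end

section
/- (Equality case of Micchelli's Lemma) Let x₁,…,xₙ ∈ ℝ^d and c₁,…,cₙ ∈ ℝ satisfy ∑ᵢ cᵢ p(xᵢ) = 0 for all polynomials p of degree < k. Then ∑ᵢ ∑ⱼ cᵢcⱼ ‖xᵢ−xⱼ‖^(2k) = 0 if and only if ∑ᵢ cᵢ p(xᵢ) = 0 for all polynomials p of degree ≤ k. -/
open MvPolynomial Finset

lemma aux_mono {d k : ℕ} (s : Fin d →₀ ℕ) (hs : (s.sum fun _ n => n) = k) :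
    ∃ g : Fin k → Fin d, ∀ v : Fin d → ℝ, (∏ m, v (g m)) = s.prod fun t e => v t ^ e := by
  classical
  set l := s.toMultiset.toList with hl
  have hlen : l.length = k := by
    rw [hl, Multiset.length_toList, Finsupp.card_toMultiset]
    exact hs
  refine ⟨fun m => l.get (Fin.cast hlen.symm m), fun v => ?_⟩
  have h1 : (∏ m : Fin k, v (l.get (Fin.cast hlen.symm m))) = ∏ m : Fin l.length, v (l.get m) :=
    Fintype.prod_equiv (finCongr hlen.symm) _ _ (fun m => rfl)
  have h2 : (∏ m : Fin l.length, v (l.get m)) = (l.map v).prod := by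
    rw [← List.prod_ofFn]
    congr 1
    conv_rhs => rw [← List.ofFn_get l, List.map_ofFn]
    rfl
  have h3 : ((l.map v : List ℝ) : Multiset ℝ).prod = (s.toMultiset.map v).prod := by
    congr 1
    rw [← Multiset.map_coe, hl, Multiset.coe_toList]
  have h4 : (s.toMultiset.map v).prod = s.prod fun t e => v t ^ e := by
    rw [Finsupp.toMultiset_map, Finsupp.prod_toMultiset,
      Finsupp.prod_mapDomain_index (fun _ => pow_zero _) (fun _ _ _ => pow_add _ _ _)]
  rw [h1, h2, ← Multiset.prod_coe, h3, h4]

noncomputable def auxq (d a cc : ℕ) (g : Fin cc → Fin d) : MvPolynomial (Fin d) ℝ :=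
  (∑ t, X t ^ 2) ^ a * ∏ mm, X (g mm)

lemma auxq_eval (d a cc : ℕ) (g : Fin cc → Fin d) (v : Fin d → ℝ) :
    MvPolynomial.eval v (auxq d a cc g) = (∑ t, v t ^ 2) ^ a * ∏ mm, v (g mm) := by
  simp [auxq]

lemma auxq_deg (d a cc : ℕ) (g : Fin cc → Fin d) :
    (auxq d a cc g).totalDegree ≤ 2 * a + cc := by
  refine (totalDegree_mul _ _).trans (add_le_add ?_ ?_)
  · refine (totalDegree_pow _ _).trans ?_
    rw [mul_comm 2 a]
    refine Nat.mul_le_mul_left a ?_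
    refine (totalDegree_finset_sum _ _).trans ?_
    refine Finset.sup_le fun t _ => ?_
    exact (totalDegree_pow _ _).trans (by simp [totalDegree_X])
  · refine (totalDegree_finset_prod _ _).trans ?_
    simp [totalDegree_X]

lemma norm_step {d : ℕ} (v w : EuclideanSpace ℝ (Fin d)) :
    ‖v - w‖ ^ 2 = (∑ t, v t ^ 2) + (∑ t, w t ^ 2) - 2 * ∑ t, v t * w t := by
  have h1 : ‖v - w‖ ^ 2 = ∑ t, (v t - w t) ^ 2 := by
    rw [EuclideanSpace.norm_eq, Real.sq_sqrt (Finset.sum_nonneg fun t _ => sq_nonneg _)]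
    simp [sq_abs]
  rw [h1]
  have h2 : ∀ t : Fin d, (v t - w t) ^ 2 = (v t ^ 2 + w t ^ 2) - 2 * (v t * w t) := fun t => by ring
  simp only [h2]
  rw [Finset.sum_sub_distrib, Finset.sum_add_distrib, ← Finset.mul_sum]

lemma swap3 {n₁ n₂ : ℕ} {γ : Type*} [Fintype γ] (F : Fin n₁ → Fin n₂ → γ → ℝ) :
    ∑ i, ∑ j, ∑ g : γ, F i j g = ∑ g : γ, ∑ i, ∑ j, F i j g := by
  calc ∑ i, ∑ j, ∑ g : γ, F i j g
      = ∑ i, ∑ g : γ, ∑ j, F i j g := Finset.sum_congr rfl fun i _ => Finset.sum_comm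
    _ = ∑ g : γ, ∑ i, ∑ j, F i j g := Finset.sum_comm

lemma swap4 {n₁ n₂ : ℕ} (p : Finset ℕ) (q : ℕ → Finset ℕ)
    (F : Fin n₁ → Fin n₂ → ℕ → ℕ → ℝ) :
    ∑ i, ∑ j, ∑ m ∈ p, ∑ a ∈ q m, F i j m a
      = ∑ m ∈ p, ∑ a ∈ q m, ∑ i, ∑ j, F i j m a := by
  calc ∑ i, ∑ j, ∑ m ∈ p, ∑ a ∈ q m, F i j m a
      = ∑ i, ∑ m ∈ p, ∑ j, ∑ a ∈ q m, F i j m a :=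
        Finset.sum_congr rfl fun i _ => Finset.sum_comm
    _ = ∑ m ∈ p, ∑ i, ∑ j, ∑ a ∈ q m, F i j m a := Finset.sum_comm
    _ = ∑ m ∈ p, ∑ i, ∑ a ∈ q m, ∑ j, F i j m a :=
        Finset.sum_congr rfl fun m _ => Finset.sum_congr rfl fun i _ => Finset.sum_comm
    _ = ∑ m ∈ p, ∑ a ∈ q m, ∑ i, ∑ j, F i j m a :=
        Finset.sum_congr rfl fun m _ => Finset.sum_comm

lemma micchelli_key (d n k : ℕ) (x : Fin n → EuclideanSpace ℝ (Fin d)) (c : Fin n → ℝ)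
    (h : ∀ p : MvPolynomial (Fin d) ℝ, p.totalDegree < k →
      ∑ i, c i * MvPolynomial.eval (x i) p = 0) :
    (∑ i, ∑ j, c i * c j * ‖x i - x j‖ ^ (2 * k)) =
      (-1 : ℝ) ^ k * ∑ m ∈ Finset.range (k + 1), ∑ a ∈ Finset.range (m + 1),
        (if 2 * a = m then
          ((k.choose m : ℝ) * (m.choose a) * 2 ^ (k - m)) *
            ∑ g : Fin (k - m) → Fin d,
              (∑ i, c i * (∑ t, x i t ^ 2) ^ a * ∏ mm, x i (g mm)) ^ 2
        else 0) := by
  classical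
  set u : Fin n → ℝ := fun i => ∑ t, x i t ^ 2 with hu
  set w : Fin n → Fin n → ℝ := fun i j => ∑ t, x i t * x j t with hwdef
  -- factorization of E
  have Efact : ∀ (a b cc : ℕ),
      (∑ i, ∑ j, (c i * u i ^ a) * (c j * u j ^ b) * w i j ^ cc)
        = ∑ g : Fin cc → Fin d,
            (∑ i, c i * u i ^ a * ∏ mm, x i (g mm)) *
            (∑ j, c j * u j ^ b * ∏ mm, x j (g mm)) := by
    intro a b cc
    have hwp : ∀ i j, w i j ^ cc
        = ∑ g : Fin cc → Fin d, (∏ mm, x i (g mm)) * (∏ mm, x j (g mm)) := by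
      intro i j
      rw [hwdef]
      rw [Fintype.sum_pow (fun t => x i t * x j t) cc]
      exact Finset.sum_congr rfl fun g _ => Finset.prod_mul_distrib
    calc (∑ i, ∑ j, (c i * u i ^ a) * (c j * u j ^ b) * w i j ^ cc)
        = ∑ i, ∑ j, ∑ g : Fin cc → Fin d,
            (c i * u i ^ a * ∏ mm, x i (g mm)) * (c j * u j ^ b * ∏ mm, x j (g mm)) := by
          refine Finset.sum_congr rfl fun i _ => Finset.sum_congr rfl fun j _ => ?_
          rw [hwp, Finset.mul_sum]
          exact Finset.sum_congr rfl fun g _ => by ring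
      _ = ∑ g : Fin cc → Fin d, ∑ i, ∑ j,
            (c i * u i ^ a * ∏ mm, x i (g mm)) * (c j * u j ^ b * ∏ mm, x j (g mm)) := by exact swap3 _
      _ = ∑ g : Fin cc → Fin d,
            (∑ i, c i * u i ^ a * ∏ mm, x i (g mm)) *
            (∑ j, c j * u j ^ b * ∏ mm, x j (g mm)) := by
          exact Finset.sum_congr rfl fun g _ => (Finset.sum_mul_sum _ _ _ _).symm
  -- inner sums as polynomial evaluations
  have hR : ∀ (a cc : ℕ) (g : Fin cc → Fin d),
      (∑ i, c i * u i ^ a * ∏ mm, x i (g mm))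
        = ∑ i, c i * MvPolynomial.eval (x i) (auxq d a cc g) := by
    intro a cc g
    refine Finset.sum_congr rfl fun i _ => ?_
    rw [auxq_eval, hu, mul_assoc]
  have Evan1 : ∀ (a b cc : ℕ), 2 * a + cc < k →
      (∑ i, ∑ j, (c i * u i ^ a) * (c j * u j ^ b) * w i j ^ cc) = 0 := by
    intro a b cc hlt
    rw [Efact]
    refine Finset.sum_eq_zero fun g _ => ?_
    rw [hR a cc g, h _ (lt_of_le_of_lt (auxq_deg d a cc g) hlt), zero_mul]
  have Evan2 : ∀ (a b cc : ℕ), 2 * b + cc < k →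
      (∑ i, ∑ j, (c i * u i ^ a) * (c j * u j ^ b) * w i j ^ cc) = 0 := by
    intro a b cc hlt
    rw [Efact]
    refine Finset.sum_eq_zero fun g _ => ?_
    rw [hR b cc g, h _ (lt_of_le_of_lt (auxq_deg d b cc g) hlt), mul_zero]
  -- expansion per (i, j)
  have expand : ∀ i j, c i * c j * ‖x i - x j‖ ^ (2 * k)
      = ∑ m ∈ Finset.range (k + 1), ∑ a ∈ Finset.range (m + 1),
          ((k.choose m : ℝ) * (m.choose a) * (-2) ^ (k - m)) *
            ((c i * u i ^ a) * (c j * u j ^ (m - a)) * w i j ^ (k - m)) := by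
    intro i j
    have hn : ‖x i - x j‖ ^ (2 * k) = ((u i + u j) + (-2 * w i j)) ^ k := by
      rw [pow_mul, norm_step]
      congr 1
      ring
    rw [hn, add_pow, Finset.mul_sum]
    refine Finset.sum_congr rfl fun m hm => ?_
    rw [add_pow, mul_pow, Finset.sum_mul, Finset.sum_mul, Finset.mul_sum]
    refine Finset.sum_congr rfl fun a ha => ?_
    ring
  simp only [expand]
  rw [swap4, Finset.mul_sum]
  refine Finset.sum_congr rfl fun m hm => ?_
  rw [Finset.mul_sum]
  refine Finset.sum_congr rfl fun a ha => ?_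
  have hmk : m ≤ k := by have := Finset.mem_range.mp hm; omega
  have ham : a ≤ m := by have := Finset.mem_range.mp ha; omega
  simp only [← Finset.mul_sum, ← Finset.sum_mul]
  by_cases h2a : 2 * a = m
  · rw [if_pos h2a]
    have hba : m - a = a := by omega
    have hsign : ((-2 : ℝ)) ^ (k - m) = (-1) ^ k * 2 ^ (k - m) := by
      rw [neg_pow]
      congr 1
      have hme : Even m := ⟨a, by omega⟩
      conv_rhs => rw [← Nat.sub_add_cancel hmk, pow_add, hme.neg_one_pow, mul_one]
    have hE : (∑ i, ∑ j, (c i * u i ^ a) * (c j * u j ^ (m - a)) * w i j ^ (k - m))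
        = ∑ g : Fin (k - m) → Fin d, (∑ i, c i * u i ^ a * ∏ mm, x i (g mm)) ^ 2 := by
      rw [hba, Efact]
      exact Finset.sum_congr rfl fun g _ => (sq _).symm
    calc ((k.choose m : ℝ) * (m.choose a) * (-2) ^ (k - m)) *
            ∑ i, ∑ j, (c i * u i ^ a) * (c j * u j ^ (m - a)) * w i j ^ (k - m)
        = ((k.choose m : ℝ) * (m.choose a) * ((-1) ^ k * 2 ^ (k - m))) *
            ∑ g : Fin (k - m) → Fin d, (∑ i, c i * u i ^ a * ∏ mm, x i (g mm)) ^ 2 := by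
          rw [hsign, hE]
      _ = (-1 : ℝ) ^ k * (((k.choose m : ℝ) * (m.choose a) * 2 ^ (k - m)) *
            ∑ g : Fin (k - m) → Fin d, (∑ i, c i * u i ^ a * ∏ mm, x i (g mm)) ^ 2) := by
          ring
  · rw [if_neg h2a, mul_zero]
    rcases Nat.lt_or_ge (2 * a) m with hlt | hge
    · rw [Evan1 a (m - a) (k - m) (by omega), mul_zero]
    · have hgt : m < 2 * a := by omega
      rw [Evan2 a (m - a) (k - m) (by omega), mul_zero]

/-- Equality case of Micchelli's Lemma: under the hypothesis that `∑ᵢ cᵢ p(xᵢ) = 0` for all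
`p` of degree `< k`, one has `∑ᵢ∑ⱼ cᵢcⱼ ‖xᵢ−xⱼ‖^(2k) = 0` iff `∑ᵢ cᵢ p(xᵢ) = 0` for all
`p` of degree `≤ k`. -/
theorem micchelli_lemma_equality (d n k : ℕ) (x : Fin n → EuclideanSpace ℝ (Fin d))
    (c : Fin n → ℝ)
    (h : ∀ p : MvPolynomial (Fin d) ℝ, p.totalDegree < k →
      ∑ i, c i * MvPolynomial.eval (x i) p = 0) :
    (∑ i, ∑ j, c i * c j * ‖x i - x j‖ ^ (2 * k)) = 0 ↔
      ∀ p : MvPolynomial (Fin d) ℝ, p.totalDegree ≤ k →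
        ∑ i, c i * MvPolynomial.eval (x i) p = 0 := by
  classical
  rw [micchelli_key d n k x c h]
  have hterm_nonneg : ∀ m ∈ Finset.range (k + 1), ∀ a ∈ Finset.range (m + 1),
      (0 : ℝ) ≤ (if 2 * a = m then
          ((k.choose m : ℝ) * (m.choose a) * 2 ^ (k - m)) *
            ∑ g : Fin (k - m) → Fin d,
              (∑ i, c i * (∑ t, x i t ^ 2) ^ a * ∏ mm, x i (g mm)) ^ 2
        else 0) := by
    intro m _ a _
    split
    · exact mul_nonneg (by positivity) (Finset.sum_nonneg fun g _ => sq_nonneg _)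
    · exact le_refl 0
  constructor
  · intro hS p hp
    -- get that the whole nonneg sum is zero
    have hN : (∑ m ∈ Finset.range (k + 1), ∑ a ∈ Finset.range (m + 1),
        (if 2 * a = m then
          ((k.choose m : ℝ) * (m.choose a) * 2 ^ (k - m)) *
            ∑ g : Fin (k - m) → Fin d,
              (∑ i, c i * (∑ t, x i t ^ 2) ^ a * ∏ mm, x i (g mm)) ^ 2
        else 0)) = 0 := by
      have hne : ((-1 : ℝ) ^ k) ≠ 0 := by
        simp [pow_ne_zero]
      exact (mul_eq_zero.mp hS).resolve_left hne
    have hzero : ∀ m ∈ Finset.range (k + 1), ∀ a ∈ Finset.range (m + 1),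
        (if 2 * a = m then
          ((k.choose m : ℝ) * (m.choose a) * 2 ^ (k - m)) *
            ∑ g : Fin (k - m) → Fin d,
              (∑ i, c i * (∑ t, x i t ^ 2) ^ a * ∏ mm, x i (g mm)) ^ 2
        else 0) = 0 := by
      have h1 := (Finset.sum_eq_zero_iff_of_nonneg
        (fun m hm => Finset.sum_nonneg (hterm_nonneg m hm))).mp hN
      intro m hm
      exact (Finset.sum_eq_zero_iff_of_nonneg (hterm_nonneg m hm)).mp (h1 m hm)
    -- extract the m = 0, a = 0 term
    have h00 := hzero 0 (Finset.mem_range.mpr (by omega)) 0 (Finset.mem_range.mpr (by omega))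
    rw [if_pos rfl] at h00
    have hpos : (0 : ℝ) < ((k.choose 0 : ℝ) * ((0 : ℕ).choose 0) * 2 ^ (k - 0)) := by
      simp only [Nat.choose_self, Nat.choose_zero_right, Nat.cast_one, one_mul, Nat.sub_zero]
      positivity
    have hsumsq : (∑ g : Fin (k - 0) → Fin d,
        (∑ i, c i * (∑ t, x i t ^ 2) ^ 0 * ∏ mm, x i (g mm)) ^ 2) = 0 := by
      rcases mul_eq_zero.mp h00 with h' | h'
      · exact absurd h' hpos.ne'
      · exact h'
    have hmono : ∀ g : Fin k → Fin d, (∑ i, c i * ∏ mm, x i (g mm)) = 0 := by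
      intro g
      have := (Finset.sum_eq_zero_iff_of_nonneg (fun g _ => sq_nonneg _)).mp hsumsq
        (fun mm : Fin (k - 0) => g (Fin.cast (Nat.sub_zero k) mm)) (Finset.mem_univ _)
      have h2 := pow_eq_zero_iff (n := 2) (by omega) |>.mp this
      rw [← h2]
      refine Finset.sum_congr rfl fun i _ => ?_
      rw [pow_zero, mul_one]
      rfl
    -- now prove the vanishing for p
    rw [p.as_sum]
    simp only [map_sum, Finset.mul_sum]
    rw [Finset.sum_comm]
    refine Finset.sum_eq_zero fun s hs => ?_
    have hsle : (s.sum fun _ e => e) ≤ k := le_trans (le_totalDegree hs) hp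
    rcases lt_or_eq_of_le hsle with hslt | hseq
    · have := h (monomial s (coeff s p)) ?_
      · simpa using this
      · rw [totalDegree_monomial _ (mem_support_iff.mp hs)]
        exact hslt
    · obtain ⟨g, hg⟩ := aux_mono s hseq
      have : ∀ i, MvPolynomial.eval (x i) ((monomial s) (coeff s p))
          = coeff s p * ∏ mm, x i (g mm) := by
        intro i
        rw [eval_monomial, hg]
      simp only [this]
      calc ∑ i, c i * (coeff s p * ∏ mm, x i (g mm))
          = coeff s p * ∑ i, c i * ∏ mm, x i (g mm) := by
            rw [Finset.mul_sum]
            exact Finset.sum_congr rfl fun i _ => by ring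
        _ = 0 := by rw [hmono g, mul_zero]
  · intro hall
    rw [mul_eq_zero]
    right
    refine Finset.sum_eq_zero fun m hm => Finset.sum_eq_zero fun a ha => ?_
    split
    case isTrue h2a =>
      have hmk : m ≤ k := by have := Finset.mem_range.mp hm; omega
      have hRzero : ∀ g : Fin (k - m) → Fin d,
          (∑ i, c i * (∑ t, x i t ^ 2) ^ a * ∏ mm, x i (g mm)) = 0 := by
        intro g
        have heq : (∑ i, c i * (∑ t, x i t ^ 2) ^ a * ∏ mm, x i (g mm))
            = ∑ i, c i * MvPolynomial.eval (x i) (auxq d a (k - m) g) := by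
          refine Finset.sum_congr rfl fun i _ => ?_
          rw [auxq_eval, mul_assoc]
        rw [heq]
        refine hall _ (le_trans (auxq_deg d a (k - m) g) ?_)
        omega
      have : (∑ g : Fin (k - m) → Fin d,
          (∑ i, c i * (∑ t, x i t ^ 2) ^ a * ∏ mm, x i (g mm)) ^ 2) = 0 :=
        Finset.sum_eq_zero fun g _ => by rw [hRzero g]; ring
      rw [this, mul_zero]
    case isFalse => rfl
end

section
/- Let λ be a linear functional on the space Π(ℝ^d) of real polynomials in d variables that vanishes on all polynomials of degree < k. Then (−1)^k (λ⊗λ)(‖x−y‖^(2k)) ≥ 0, where λ⊗λ is applied to the polynomial (x,y) ↦ ‖x−y‖^(2k) regarded as an element of Π(ℝ^d)⊗Π(ℝ^d). -/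
open MvPolynomial Finset

noncomputable section

/-- The multi-index on the first (`x`) block of variables of a monomial in `Fin d ⊕ Fin d`. -/
def xpart {d : ℕ} (m : (Fin d ⊕ Fin d) →₀ ℕ) : Fin d →₀ ℕ :=
  Finsupp.equivFunOnFinite.symm fun i => m (Sum.inl i)

/-- The multi-index on the second (`y`) block of variables. -/
def ypart {d : ℕ} (m : (Fin d ⊕ Fin d) →₀ ℕ) : Fin d →₀ ℕ :=
  Finsupp.equivFunOnFinite.symm fun i => m (Sum.inr i)

/-- `(l ⊗ m) f`: apply `l` in the `x`-variables and `m` in the `y`-variables of a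
two-block polynomial `f`, via its canonical representation as a sum of products
of monomials in `x` and monomials in `y`. -/
def tensorApply {d : ℕ} (l m : Module.Dual ℝ (MvPolynomial (Fin d) ℝ))
    (f : MvPolynomial (Fin d ⊕ Fin d) ℝ) : ℝ :=
  ∑ mo ∈ f.support, f.coeff mo * l (monomial (xpart mo) 1) * m (monomial (ypart mo) 1)

/-- Apply the linear functional `l` in the second (`y`) block of variables,
yielding a polynomial in the first (`x`) block of variables. -/
def applySecond {d : ℕ} (l : Module.Dual ℝ (MvPolynomial (Fin d) ℝ))
    (f : MvPolynomial (Fin d ⊕ Fin d) ℝ) : MvPolynomial (Fin d) ℝ :=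
  ∑ mo ∈ f.support, monomial (xpart mo) (f.coeff mo * l (monomial (ypart mo) 1))

/-- The polynomial `(x,y) ↦ ‖x-y‖^(2k)` in the `2d` variables `x(1),…,x(d),y(1),…,y(d)`. -/
def distPoly (d k : ℕ) : MvPolynomial (Fin d ⊕ Fin d) ℝ :=
  (∑ i : Fin d, (X (Sum.inl i) - X (Sum.inr i)) ^ 2) ^ k

/-- `l` vanishes on all polynomials of total degree `< k` (i.e. `l ⊥ Π_{<k}`). -/
def VanishesLT {d : ℕ} (l : Module.Dual ℝ (MvPolynomial (Fin d) ℝ)) (k : ℕ) : Prop :=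
  ∀ p : MvPolynomial (Fin d) ℝ, p.totalDegree < k → l p = 0

/-- `l` vanishes on all polynomials of total degree `≤ k` (i.e. `l ⊥ Π_{≤k}`). -/
def VanishesLE {d : ℕ} (l : Module.Dual ℝ (MvPolynomial (Fin d) ℝ)) (k : ℕ) : Prop :=
  ∀ p : MvPolynomial (Fin d) ℝ, p.totalDegree ≤ k → l p = 0

/-- `p_{a,β} : x ↦ ‖x‖^(2a) x^β` as a polynomial. -/
def pPoly (d : ℕ) (a : ℕ) (β : Fin d →₀ ℕ) : MvPolynomial (Fin d) ℝ :=
  (∑ i : Fin d, X i ^ 2) ^ a * monomial β 1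

/-!
Write `‖x - y‖² = ‖x‖² + ‖y‖² - 2⟨x, y⟩` and expand the `k`-th power: it is a combination, with
nonnegative binomial coefficients, of the terms `(-2)^b ‖x‖^(2a) ‖y‖^(2c) ⟨x, y⟩^b` with
`a + b + c = k`, and `⟨x, y⟩^b = ∑_f x_f y_f` over `f : Fin b → Fin d`, where `x_f = ∏ j, x (f j)`.
Hence `λ ⊗ λ` of such a term is `(-2)^b ∑_f λ(‖x‖^(2a) x_f) λ(‖x‖^(2c) x_f)`. The two arguments of
`λ` have degrees `2a + b` and `2c + b`, adding up to `2k`, so unless `a = c` one of them has degree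
`< k` and the term vanishes. When `a = c` we have `k = 2a + b`, so `(-1)^k (-2)^b = 2^b` multiplies
a sum of squares.
-/

lemma map_monomial_eq_smul {σ R M : Type*} [CommSemiring R] [AddCommMonoid M] [Module R M]
    (f : MvPolynomial σ R →ₗ[R] M) (s : σ →₀ ℕ) (a : R) :
    f (monomial s a) = a • f (monomial s 1) := by
  rw [← map_smul, smul_monomial, smul_eq_mul, mul_one]

section

variable {d : ℕ}

lemma xpart_mapDomain_inl_add_mapDomain_inr (α β : Fin d →₀ ℕ) :
    xpart (Finsupp.mapDomain Sum.inl α + Finsupp.mapDomain Sum.inr β) = α := by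
  ext i
  change Finsupp.mapDomain Sum.inl α (Sum.inl i) + Finsupp.mapDomain Sum.inr β (Sum.inl i) = _
  rw [Finsupp.mapDomain_apply Sum.inl_injective,
    Finsupp.mapDomain_of_notMem_range _ _ (by simp), add_zero]

lemma ypart_mapDomain_inl_add_mapDomain_inr (α β : Fin d →₀ ℕ) :
    ypart (Finsupp.mapDomain Sum.inl α + Finsupp.mapDomain Sum.inr β) = β := by
  ext i
  change Finsupp.mapDomain Sum.inl α (Sum.inr i) + Finsupp.mapDomain Sum.inr β (Sum.inr i) = _
  rw [Finsupp.mapDomain_apply Sum.inr_injective,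
    Finsupp.mapDomain_of_notMem_range _ _ (by simp), zero_add]

def tensorApplyₗ (l m : Module.Dual ℝ (MvPolynomial (Fin d) ℝ)) :
    MvPolynomial (Fin d ⊕ Fin d) ℝ →ₗ[ℝ] ℝ :=
  (basisMonomials _ ℝ).constr ℝ fun mo => l (monomial (xpart mo) 1) * m (monomial (ypart mo) 1)

lemma tensorApplyₗ_apply (l m : Module.Dual ℝ (MvPolynomial (Fin d) ℝ))
    (f : MvPolynomial (Fin d ⊕ Fin d) ℝ) : tensorApplyₗ l m f = tensorApply l m f := by
  rw [tensorApplyₗ, Module.Basis.constr_apply, tensorApply, Finsupp.sum]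
  exact sum_congr rfl fun mo _ => (mul_assoc _ _ _).symm

lemma tensorApplyₗ_monomial (l m : Module.Dual ℝ (MvPolynomial (Fin d) ℝ))
    (mo : Fin d ⊕ Fin d →₀ ℕ) (c : ℝ) :
    tensorApplyₗ l m (monomial mo c) =
      c * (l (monomial (xpart mo) 1) * m (monomial (ypart mo) 1)) := by
  rw [map_monomial_eq_smul, tensorApplyₗ, ← congr_fun (coe_basisMonomials _ ℝ) mo,
    Module.Basis.constr_basis, smul_eq_mul]

lemma tensorApplyₗ_rename_inl_mul_rename_inr (l m : Module.Dual ℝ (MvPolynomial (Fin d) ℝ))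
    (p q : MvPolynomial (Fin d) ℝ) :
    tensorApplyₗ l m (rename Sum.inl p * rename Sum.inr q) = l p * m q := by
  induction p using MvPolynomial.induction_on' with
  | add p₁ p₂ h₁ h₂ => rw [map_add, add_mul, map_add, h₁, h₂, map_add, add_mul]
  | monomial α a =>
    induction q using MvPolynomial.induction_on' with
    | add q₁ q₂ h₁ h₂ => rw [map_add, mul_add, map_add, h₁, h₂, map_add, mul_add]
    | monomial β b =>
      rw [rename_monomial, rename_monomial, monomial_mul, tensorApplyₗ_monomial,
        xpart_mapDomain_inl_add_mapDomain_inr, ypart_mapDomain_inl_add_mapDomain_inr,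
        map_monomial_eq_smul l α a, map_monomial_eq_smul m β b, smul_eq_mul, smul_eq_mul]
      ring

def sqNormPoly (d : ℕ) : MvPolynomial (Fin d) ℝ := ∑ i, X i ^ 2

def innerPoly (d : ℕ) : MvPolynomial (Fin d ⊕ Fin d) ℝ := ∑ i, X (Sum.inl i) * X (Sum.inr i)

lemma distPoly_eq (d k : ℕ) :
    distPoly d k = (rename Sum.inl (sqNormPoly d) + rename Sum.inr (sqNormPoly d) +
      C (-2) * innerPoly d) ^ k := by
  simp only [distPoly, sqNormPoly, innerPoly, map_sum, map_pow, rename_X, mul_sum,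
    ← sum_add_distrib]
  congr 1
  refine sum_congr rfl fun i _ => ?_
  rw [map_neg, map_ofNat]
  ring

lemma innerPoly_pow (d b : ℕ) :
    innerPoly d ^ b =
      ∑ f : Fin b → Fin d, rename Sum.inl (∏ j, X (f j)) * rename Sum.inr (∏ j, X (f j)) := by
  rw [innerPoly, ← Fin.prod_const, Fintype.prod_sum]
  simp only [map_prod, rename_X, prod_mul_distrib]

lemma tensorApplyₗ_sqNormPoly_pow_mul_innerPoly_pow
    (l m : Module.Dual ℝ (MvPolynomial (Fin d) ℝ)) (a b c : ℕ) :
    tensorApplyₗ l m (rename Sum.inl (sqNormPoly d ^ a) * rename Sum.inr (sqNormPoly d ^ c) *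
        innerPoly d ^ b) =
      ∑ f : Fin b → Fin d,
        l (sqNormPoly d ^ a * ∏ j, X (f j)) * m (sqNormPoly d ^ c * ∏ j, X (f j)) := by
  rw [innerPoly_pow, mul_sum, map_sum]
  refine sum_congr rfl fun f _ => ?_
  rw [← tensorApplyₗ_rename_inl_mul_rename_inr]
  congr 1
  simp only [map_mul]
  ring

lemma totalDegree_sqNormPoly_pow_mul_prod_X_le (a : ℕ) {b : ℕ} (f : Fin b → Fin d) :
    (sqNormPoly d ^ a * ∏ j, X (f j)).totalDegree ≤ 2 * a + b := by
  have hS : (sqNormPoly d).totalDegree ≤ 2 :=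
    totalDegree_finsetSum_le fun i _ => by rw [totalDegree_X_pow]
  calc (sqNormPoly d ^ a * ∏ j, X (f j)).totalDegree
      ≤ a * (sqNormPoly d).totalDegree + ∑ j, (X (f j) : MvPolynomial (Fin d) ℝ).totalDegree :=
        (totalDegree_mul _ _).trans (add_le_add (totalDegree_pow _ _) (totalDegree_finsetProd _ _))
    _ ≤ 2 * a + b := by
        simp only [totalDegree_X, sum_const, card_univ, Fintype.card_fin, smul_eq_mul, mul_one]
        nlinarith

lemma neg_one_pow_mul_tensorApplyₗ_term_nonneg {l : Module.Dual ℝ (MvPolynomial (Fin d) ℝ)}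
    {k : ℕ} (hl : VanishesLT l k) {a b c : ℕ} (habc : a + b + c = k) :
    0 ≤ (-1) ^ k * (-2) ^ b * tensorApplyₗ l l (rename Sum.inl (sqNormPoly d ^ a) *
      rename Sum.inr (sqNormPoly d ^ c) * innerPoly d ^ b) := by
  rw [tensorApplyₗ_sqNormPoly_pow_mul_innerPoly_pow, mul_sum]
  refine sum_nonneg fun f _ => ?_
  have hvanish {e : ℕ} (he : 2 * e + b < k) : l (sqNormPoly d ^ e * ∏ j, X (f j)) = 0 :=
    hl _ ((totalDegree_sqNormPoly_pow_mul_prod_X_le e f).trans_lt he)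
  by_cases ha : 2 * a + b < k
  · simp [hvanish ha]
  by_cases hc : 2 * c + b < k
  · simp [hvanish hc]
  obtain rfl : a = c := by omega
  have hsign : (-1 : ℝ) ^ k * (-2) ^ b = 2 ^ b := by
    rw [← habc, show a + b + a = 2 * a + b by ring, pow_add, pow_mul, neg_one_sq, one_pow,
      one_mul, ← mul_pow, neg_one_mul, neg_neg]
  rw [hsign]
  exact mul_nonneg (by positivity) (mul_self_nonneg _)

end

/-- If `λ ⊥ Π_{<k}` then `(−1)^k (λ⊗λ)‖x−y‖^(2k) ≥ 0`. -/
theorem tensor_sq_dist_nonneg (d k : ℕ) (l : Module.Dual ℝ (MvPolynomial (Fin d) ℝ))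
    (h : VanishesLT l k) :
    0 ≤ (-1 : ℝ) ^ k * tensorApply l l (distPoly d k) := by
  rw [← tensorApplyₗ_apply, distPoly_eq, add_pow, map_sum, mul_sum]
  refine sum_nonneg fun m hm => ?_
  rw [add_pow, sum_mul, sum_mul, map_sum, mul_sum]
  refine sum_nonneg fun a ha => ?_
  have hmk : m ≤ k := Nat.lt_succ_iff.mp (mem_range.mp hm)
  have ham : a ≤ m := Nat.lt_succ_iff.mp (mem_range.mp ha)
  set term := rename Sum.inl (sqNormPoly d ^ a) * rename Sum.inr (sqNormPoly d ^ (m - a)) *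
    innerPoly d ^ (k - m)
  have hterm : rename Sum.inl (sqNormPoly d) ^ a * rename Sum.inr (sqNormPoly d) ^ (m - a) *
      (m.choose a : MvPolynomial (Fin d ⊕ Fin d) ℝ) * (C (-2) * innerPoly d) ^ (k - m) *
      (k.choose m : MvPolynomial (Fin d ⊕ Fin d) ℝ) =
      C ((m.choose a * k.choose m : ℝ) * (-2) ^ (k - m)) * term := by
    simp only [term, map_mul, map_pow, map_natCast]
    ring
  rw [hterm, ← smul_eq_C_mul, map_smul, smul_eq_mul,
    show ∀ x y z : ℝ, (-1) ^ k * (x * y * z) = x * ((-1) ^ k * y * z) by intros; ring]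
  exact mul_nonneg (by positivity) (neg_one_pow_mul_tensorApplyₗ_term_nonneg h (by omega))
end
end

section
/- Let λ be a linear functional on Π(ℝ^d) vanishing on polynomials of degree < k. With p_{a,β}(x) := ‖x‖^(2a) x^β, one has (λ⊗λ)‖x−y‖^(2k) = (−1)^k ∑_{b: k−b even, 0≤b≤k} 2^b · k!/(((k−b)/2)!)² · ∑_{|β|=b} (λ p_{(k−b)/2,β})² / β!. -/
open MvPolynomial Finset

noncomputable section

/-! Writing `‖x - y‖² = -2⟨x, y⟩ + ‖x‖² + ‖y‖²` and expanding the `k`-th power by the binomial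
and multinomial theorems turns `(λ ⊗ λ)‖x - y‖^(2k)` into a sum of terms
`(-2)^j C(k, j) C(k - j, i) (j choose β) λ(p_{i,β}) λ(p_{k-j-i,β})` with `|β| = j`.
The degrees `2i + j` and `2(k - j - i) + j` of the two factors add up to `2k`, so `λ ⊥ Π_{<k}`
kills every term except those with `2i = k - j`; there the two factors coincide and the
coefficient is `(-1)^k 2^j k! / (i!² β!)`. -/

section Multinomial

variable {R : Type*} [CommSemiring R]

theorem add_add_pow_eq_sum (a b c : R) (k : ℕ) :
    (a + (b + c)) ^ k = ∑ j ∈ range (k + 1), ∑ i ∈ range (k - j + 1),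
      (k.choose j * (k - j).choose i : ℕ) * (a ^ j * b ^ i * c ^ (k - j - i)) := by
  rw [add_pow]
  refine sum_congr rfl fun j _ => ?_
  rw [add_pow, mul_sum, sum_mul]
  refine sum_congr rfl fun i _ => ?_
  push_cast
  ring

theorem Finset.sum_pow_eq_sum_finsuppAntidiag {ι : Type*} [Fintype ι] [DecidableEq ι]
    (f : ι → R) (n : ℕ) :
    (∑ i, f i) ^ n = ∑ β ∈ finsuppAntidiag univ n, β.multinomial * ∏ i, f i ^ β i := by
  rw [sum_pow_eq_sum_piAntidiag]
  refine sum_equiv Finsupp.equivFunOnFinite.symm (fun β => by simp) fun β _ => ?_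
  rw [Finsupp.multinomial_eq_of_support_subset (subset_univ _)]
  rfl

end Multinomial

theorem Finset.sum_range_succ_eq_ite_even {M : Type*} [AddCommMonoid M] {n : ℕ} {g : ℕ → M}
    (hg : ∀ i ≤ n, 2 * i ≠ n → g i = 0) :
    ∑ i ∈ range (n + 1), g i = if Even n then g (n / 2) else 0 := by
  split_ifs with hn
  · refine sum_eq_single_of_mem _ (mem_range.2 (by omega)) fun i hi hne => hg i ?_ ?_
    · exact Nat.lt_succ_iff.1 (mem_range.1 hi)
    · obtain ⟨r, rfl⟩ := hn
      omega
  · refine sum_eq_zero fun i hi => hg i (Nat.lt_succ_iff.1 (mem_range.1 hi)) ?_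
    rintro rfl
    exact hn (even_two_mul i)

variable {d : ℕ}

lemma MvPolynomial.monomial_eq_smul_monomial_one {σ R : Type*} [CommSemiring R]
    (s : σ →₀ ℕ) (c : R) :
    monomial s c = c • monomial s 1 := by
  rw [smul_monomial, smul_eq_mul, mul_one]

lemma xpart_mapDomain_add (α γ : Fin d →₀ ℕ) :
    xpart (Finsupp.mapDomain Sum.inl α + Finsupp.mapDomain Sum.inr γ) = α := by
  ext i
  simp [xpart, Finsupp.mapDomain_apply Sum.inl_injective, Finsupp.mapDomain_of_notMem_range]

lemma ypart_mapDomain_add (α γ : Fin d →₀ ℕ) :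
    ypart (Finsupp.mapDomain Sum.inl α + Finsupp.mapDomain Sum.inr γ) = γ := by
  ext i
  simp [ypart, Finsupp.mapDomain_apply Sum.inr_injective, Finsupp.mapDomain_of_notMem_range]

section Tensor

variable (l m : Module.Dual ℝ (MvPolynomial (Fin d) ℝ))

lemma tensorApply_eq_constr :
    tensorApply l m = (basisMonomials _ ℝ).constr ℝ
      fun mo => l (monomial (xpart mo) 1) * m (monomial (ypart mo) 1) := by
  ext f
  rw [Module.Basis.constr_apply, tensorApply, Finsupp.sum]
  refine sum_congr rfl fun mo _ => ?_
  rw [smul_eq_mul, mul_assoc]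
  rfl

lemma tensorApply_add (f g : MvPolynomial (Fin d ⊕ Fin d) ℝ) :
    tensorApply l m (f + g) = tensorApply l m f + tensorApply l m g := by
  rw [tensorApply_eq_constr]
  exact map_add _ f g

lemma tensorApply_sum {ι : Type*} (s : Finset ι) (f : ι → MvPolynomial (Fin d ⊕ Fin d) ℝ) :
    tensorApply l m (∑ i ∈ s, f i) = ∑ i ∈ s, tensorApply l m (f i) := by
  rw [tensorApply_eq_constr]
  exact map_sum _ f s

lemma tensorApply_smul (c : ℝ) (f : MvPolynomial (Fin d ⊕ Fin d) ℝ) :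
    tensorApply l m (c • f) = c * tensorApply l m f := by
  rw [tensorApply_eq_constr]
  exact map_smul _ c f

lemma tensorApply_monomial (mo : (Fin d ⊕ Fin d) →₀ ℕ) (c : ℝ) :
    tensorApply l m (monomial mo c) =
      c * (l (monomial (xpart mo) 1) * m (monomial (ypart mo) 1)) := by
  rw [monomial_eq_smul_monomial_one, tensorApply_eq_constr, map_smul, smul_eq_mul]
  exact congrArg (c * ·) ((basisMonomials _ ℝ).constr_basis ℝ _ mo)

lemma tensorApply_rename_inl_mul_rename_inr (p q : MvPolynomial (Fin d) ℝ) :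
    tensorApply l m (rename Sum.inl p * rename Sum.inr q) = l p * m q := by
  induction p using MvPolynomial.induction_on' with
  | add p₁ p₂ h₁ h₂ => rw [map_add, add_mul, tensorApply_add, h₁, h₂, map_add, add_mul]
  | monomial α a =>
    induction q using MvPolynomial.induction_on' with
    | add q₁ q₂ h₁ h₂ =>
      rw [map_add, mul_add, tensorApply_add, h₁, h₂, map_add, mul_add]
    | monomial γ c =>
      rw [rename_monomial, rename_monomial, monomial_mul, tensorApply_monomial,
        xpart_mapDomain_add, ypart_mapDomain_add, monomial_eq_smul_monomial_one α a,
        monomial_eq_smul_monomial_one γ c, map_smul, map_smul, smul_eq_mul, smul_eq_mul]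
      ring

end Tensor

lemma rename_pPoly (f : Fin d → Fin d ⊕ Fin d) (a : ℕ) (β : Fin d →₀ ℕ) :
    rename f (pPoly d a β) = (∑ i, X (f i) ^ 2) ^ a * ∏ i, X (f i) ^ β i := by
  simp [pPoly, monomial_eq, Finsupp.prod_fintype]

lemma distPoly_eq_sum (k : ℕ) :
    distPoly d k = ∑ j ∈ range (k + 1), ∑ i ∈ range (k - j + 1),
      ∑ β ∈ finsuppAntidiag univ j,
        ((-2 : ℝ) ^ j * (k.choose j * (k - j).choose i : ℕ) * β.multinomial) •
          (rename Sum.inl (pPoly d i β) * rename Sum.inr (pPoly d (k - j - i) β)) := by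
  have hsq :
      (∑ i : Fin d, (X (Sum.inl i) - X (Sum.inr i)) ^ 2 : MvPolynomial (Fin d ⊕ Fin d) ℝ) =
      -2 * ∑ i, X (Sum.inl i) * X (Sum.inr i) +
        (∑ i, X (Sum.inl i) ^ 2 + ∑ i, X (Sum.inr i) ^ 2) := by
    simp only [mul_sum, ← sum_add_distrib]
    exact sum_congr rfl fun i _ => by ring
  rw [distPoly, hsq, add_add_pow_eq_sum]
  refine sum_congr rfl fun j _ => sum_congr rfl fun i _ => ?_
  rw [mul_pow, sum_pow_eq_sum_finsuppAntidiag]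
  simp only [mul_sum, sum_mul]
  refine sum_congr rfl fun β _ => ?_
  simp only [rename_pPoly, mul_pow, prod_mul_distrib, smul_eq_C_mul, map_mul, map_pow, map_neg,
    map_ofNat, map_natCast]
  ring

lemma totalDegree_pPoly_le (a : ℕ) (β : Fin d →₀ ℕ) :
    (pPoly d a β).totalDegree ≤ 2 * a + β.sum fun _ e => e := by
  have hsq : (∑ i : Fin d, X i ^ 2 : MvPolynomial (Fin d) ℝ).totalDegree ≤ 2 :=
    (totalDegree_finsetSum _ _).trans <| Finset.sup_le fun i _ => by simp
  calc (pPoly d a β).totalDegree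
      ≤ a * (∑ i : Fin d, X i ^ 2 : MvPolynomial (Fin d) ℝ).totalDegree +
          (monomial β (1 : ℝ)).totalDegree :=
        (totalDegree_mul _ _).trans (add_le_add (totalDegree_pow _ _) le_rfl)
    _ ≤ 2 * a + β.sum fun _ e => e := by
      rw [totalDegree_monomial _ one_ne_zero]
      nlinarith

lemma tensorApply_distPoly (l m : Module.Dual ℝ (MvPolynomial (Fin d) ℝ)) (k : ℕ) :
    tensorApply l m (distPoly d k) = ∑ j ∈ range (k + 1), ∑ i ∈ range (k - j + 1),
      ∑ β ∈ finsuppAntidiag univ j, (-2 : ℝ) ^ j * (k.choose j * (k - j).choose i : ℕ) *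
        β.multinomial * (l (pPoly d i β) * m (pPoly d (k - j - i) β)) := by
  simp only [distPoly_eq_sum, tensorApply_sum, tensorApply_smul,
    tensorApply_rename_inl_mul_rename_inr]

namespace VanishesLT

variable {l : Module.Dual ℝ (MvPolynomial (Fin d) ℝ)} {k : ℕ}

lemma apply_pPoly_eq_zero (h : VanishesLT l k) {a : ℕ} {β : Fin d →₀ ℕ}
    (hlt : 2 * a + (β.sum fun _ e => e) < k) : l (pPoly d a β) = 0 :=
  h _ ((totalDegree_pPoly_le a β).trans_lt hlt)

lemma apply_pPoly_mul_apply_pPoly_eq_zero (h : VanishesLT l k) {a a' : ℕ} {β : Fin d →₀ ℕ}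
    (hsum : a + a' + (β.sum fun _ e => e) = k) (hne : a ≠ a') :
    l (pPoly d a β) * l (pPoly d a' β) = 0 := by
  rcases hne.lt_or_gt with hlt | hlt
  · rw [h.apply_pPoly_eq_zero (by omega), zero_mul]
  · rw [h.apply_pPoly_eq_zero (a := a') (by omega), mul_zero]

end VanishesLT

lemma choose_mul_choose_mul_multinomial_mul_factorial {k j i : ℕ} {β : Fin d →₀ ℕ}
    (hj : j ≤ k) (hi : 2 * i = k - j) (hβ : (β.sum fun _ e => e) = j) :
    k.choose j * (k - j).choose i * β.multinomial *
      (i.factorial ^ 2 * β.prod fun _ e => e.factorial) = k.factorial := by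
  have hβ : (β.prod fun _ e => e.factorial) * β.multinomial = j.factorial := by
    rw [← hβ]
    exact Nat.multinomial_spec β.support β
  have hi : (k - j).choose i * i.factorial * i.factorial = (k - j).factorial := by
    simpa [show k - j - i = i by omega] using
      Nat.choose_mul_factorial_mul_factorial (n := k - j) (k := i) (by omega)
  calc _ = k.choose j * ((β.prod fun _ e => e.factorial) * β.multinomial) *
        ((k - j).choose i * i.factorial * i.factorial) := by ring
    _ = k.factorial := by rw [hβ, hi, Nat.choose_mul_factorial_mul_factorial hj]

lemma neg_two_pow_mul_choose_mul_multinomial_eq {k j i : ℕ} {β : Fin d →₀ ℕ}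
    (hj : j ≤ k) (hi : 2 * i = k - j) (hβ : (β.sum fun _ e => e) = j) :
    (-2 : ℝ) ^ j * ((k.choose j * (k - j).choose i : ℕ) : ℝ) * β.multinomial =
      (-1) ^ k * 2 ^ j *
        (k.factorial / (i.factorial ^ 2 * ((β.prod fun _ e => e.factorial : ℕ) : ℝ))) := by
  have hsign : (-2 : ℝ) ^ j = (-1) ^ k * 2 ^ j := by
    rw [neg_pow, show k = j + 2 * i by omega, pow_add, pow_mul]
    norm_num
  rw [hsign, mul_assoc ((-1) ^ k * 2 ^ j)]
  congr 1
  rw [eq_div_iff (by simp [Finsupp.prod, prod_ne_zero_iff, Nat.factorial_ne_zero])]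
  exact_mod_cast choose_mul_choose_mul_multinomial_mul_factorial hj hi hβ

/-- For `λ ⊥ Π_{<k}`,
`(λ⊗λ)‖x−y‖^(2k) = (−1)^k ∑_{k−b even} 2^b k!/(((k−b)/2)!)² ∑_{|β|=b} (λ p_{(k−b)/2,β})²/β!`. -/
theorem tensor_sq_dist_eq_sum_of_squares (d k : ℕ)
    (l : Module.Dual ℝ (MvPolynomial (Fin d) ℝ)) (h : VanishesLT l k) :
    tensorApply l l (distPoly d k) =
      (-1 : ℝ) ^ k * ∑ b ∈ (range (k + 1)).filter (fun b => Even (k - b)),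
        (2 : ℝ) ^ b * ((k.factorial : ℝ) / (((k - b) / 2).factorial : ℝ) ^ 2) *
          ∑ β ∈ finsuppAntidiag (univ : Finset (Fin d)) b,
            (l (pPoly d ((k - b) / 2) β)) ^ 2 / ((β.prod fun _ e => e.factorial : ℕ) : ℝ) := by
  rw [tensorApply_distPoly, mul_sum, sum_filter]
  refine sum_congr rfl fun j hj => ?_
  have hjk : j ≤ k := Nat.lt_succ_iff.1 (mem_range.1 hj)
  rw [sum_range_succ_eq_ite_even fun i hi hne => sum_eq_zero fun β hβ => by
    have hβj := (mem_finsuppAntidiag'.1 hβ).1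
    rw [h.apply_pPoly_mul_apply_pPoly_eq_zero (by omega) (by omega), mul_zero]]
  split_ifs with he
  · have hi := Nat.two_mul_div_two_of_even he
    rw [show k - j - (k - j) / 2 = (k - j) / 2 by omega, mul_sum, mul_sum]
    refine sum_congr rfl fun β hβ => ?_
    rw [neg_two_pow_mul_choose_mul_multinomial_eq hjk hi (mem_finsuppAntidiag'.1 hβ).1]
    ring
  · rfl
end
end

section
/- (Schaback's Lemma, first direction) Let λ be a linear functional on Π(ℝ^d) vanishing on all polynomials of degree ≤ k, and let ℓ be an integer with k ≤ 2ℓ. Then the polynomial x ↦ λ(‖x−·‖^(2ℓ)) (λ applied in the second variable) has total degree < 2ℓ − k. -/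
open MvPolynomial Finset

noncomputable section

lemma degree_split {d : ℕ} (mo : (Fin d ⊕ Fin d) →₀ ℕ) :
    (mo.sum fun _ e => e) = ((xpart mo).sum fun _ e => e) + ((ypart mo).sum fun _ e => e) := by
  rw [Finsupp.sum_fintype _ _ (fun _ => rfl), Finsupp.sum_fintype _ _ (fun _ => rfl),
    Finsupp.sum_fintype _ _ (fun _ => rfl), Fintype.sum_sum_type]
  simp [xpart, ypart]

lemma distPoly_isHomogeneous (d l : ℕ) : (distPoly d l).IsHomogeneous (2 * l) := by
  have h2 : (∑ i : Fin d,
      ((X (Sum.inl i) : MvPolynomial (Fin d ⊕ Fin d) ℝ) - X (Sum.inr i)) ^ 2).IsHomogeneous 2 := by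
    apply IsHomogeneous.sum
    intro i _
    simpa using (((isHomogeneous_X ℝ (Sum.inl i)).sub (isHomogeneous_X ℝ (Sum.inr i))).pow 2)
  simpa [distPoly] using h2.pow l

/-- Schaback's Lemma, first direction: if `λ ⊥ Π_{≤k}` and `k ≤ 2ℓ`, then the polynomial
`x ↦ λ‖x−·‖^(2ℓ)` has total degree `< 2ℓ − k` (every coefficient of a monomial of degree
`≥ 2ℓ − k` vanishes). -/
theorem schaback_lemma_forward (d k l : ℕ) (lam : Module.Dual ℝ (MvPolynomial (Fin d) ℝ))
    (hk : k ≤ 2 * l) (h : VanishesLE lam k) :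
    ∀ m : Fin d →₀ ℕ, 2 * l - k ≤ (m.sum fun _ e => e) →
      MvPolynomial.coeff m (applySecond lam (distPoly d l)) = 0 := by
  intro m hm
  rw [applySecond, MvPolynomial.coeff_sum]
  apply Finset.sum_eq_zero
  intro mo hmo
  rw [MvPolynomial.coeff_monomial]
  by_cases hx : xpart mo = m
  · rw [if_pos hx]
    have hdeg : (mo.sum fun _ e => e) = 2 * l := by
      have := distPoly_isHomogeneous d l (MvPolynomial.mem_support_iff.mp hmo)
      rw [show (mo.sum fun _ e => e) = Finsupp.degree mo from rfl, Finsupp.degree_eq_weight_one]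
      exact this
    rw [degree_split] at hdeg
    have hy : ((ypart mo).sum fun _ e => e) ≤ k := by
      rw [hx] at hdeg; omega
    have : lam (monomial (ypart mo) 1) = 0 := by
      apply h
      rw [MvPolynomial.totalDegree_monomial _ (one_ne_zero)]
      exact hy
    rw [this, mul_zero]
  · rw [if_neg hx]
end
end

section
/- For all x, y ∈ ℝ^d and ℓ ∈ ℤ₊: ‖x−y‖^(2ℓ) = ∑_{j=0}^{2ℓ} (−1)^j ‖x‖^(2(j−ℓ)) ∑_{2a+b=j} 2^b ∑_{|β|=b} (ℓ!/(a!β!c!)) p_{c,β}(x) p_{c,β}(y), where c = ℓ − a − b and p_{c,β}(x) := ‖x‖^(2c) x^β; for j < ℓ the factor ‖x‖^(2(j−ℓ)) combines with p_{c,β}(x) = ‖x‖^(2c) x^β to give the polynomial ‖x‖^(2(c+j−ℓ)) x^β = ‖x‖^(2a) x^β, so each term is polynomial. -/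
/-!
Write `‖x - y‖² = ‖x‖² - 2⟪x, y⟫ + ‖y‖²`, expand its `ℓ`-th power by the trinomial theorem and
`⟪x, y⟫ ^ b = (∑ i, x i * y i) ^ b` by the multinomial theorem. The term with exponents
`(a, b, c)` has degree `j = 2a + b` in `x` and sign `(-1) ^ b = (-1) ^ j`; grouping by `j` is the
reindexing `(a + b, a) ↦ (j, a)`, under which `c = ℓ - (j - a)`.
-/

open Finset

lemma Finset.sum_finsuppAntidiag_eq_sum_piAntidiag {ι μ M : Type*} [DecidableEq ι]
    [AddCommMonoid μ] [HasAntidiagonal μ] [DecidableEq μ] [AddCommMonoid M]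
    (s : Finset ι) (n : μ) (f : (ι → μ) → M) :
    ∑ β ∈ finsuppAntidiag s n, f β = ∑ k ∈ piAntidiag s n, f k := by
  rw [finsuppAntidiag, sum_map]
  exact sum_attach _ _

lemma real_inner_pow_eq_sum_finsuppAntidiag {ι : Type*} [Fintype ι] [DecidableEq ι]
    (x y : EuclideanSpace ℝ ι) (n : ℕ) :
    inner ℝ x y ^ n = ∑ β ∈ finsuppAntidiag univ n,
      ((n.factorial : ℝ) / (β.prod fun _ e => e.factorial : ℕ)) *
        ((∏ i, x i ^ β i) * ∏ i, y i ^ β i) := by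
  simp_rw [Finsupp.prod_fintype _ (fun _ (e : ℕ) => e.factorial) fun _ => rfl, Nat.cast_prod]
  rw [sum_finsuppAntidiag_eq_sum_piAntidiag univ n
      (fun β => (n.factorial / ∏ i, ((β i).factorial : ℝ)) * ((∏ i, x i ^ β i) * ∏ i, y i ^ β i)),
    PiLp.inner_apply, sum_pow_eq_sum_piAntidiag]
  refine sum_congr rfl fun k hk => ?_
  rw [← (mem_piAntidiag.1 hk).1, Nat.multinomial,
    Nat.cast_div (Nat.prod_factorial_dvd_factorial_sum _ _) (by positivity), ← prod_mul_distrib]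
  simp [mul_pow, mul_comm]

lemma add_add_pow_eq_sum_choose_mul_choose {R : Type*} [CommSemiring R] (u v w : R) (l : ℕ) :
    (u + v + w) ^ l = ∑ m ∈ range (l + 1), ∑ a ∈ range (m + 1),
      u ^ a * v ^ (m - a) * w ^ (l - m) * (m.choose a * l.choose m) := by
  rw [add_pow]
  refine sum_congr rfl fun m _ => ?_
  rw [add_pow, sum_mul, sum_mul]
  refine sum_congr rfl fun a _ => ?_
  ring

lemma sum_range_sum_range_add_eq_sum_filter {M : Type*} [AddCommMonoid M] (l : ℕ)
    (f : ℕ → ℕ → M) :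
    ∑ m ∈ range (l + 1), ∑ a ∈ range (m + 1), f (m + a) a =
      ∑ j ∈ range (2 * l + 1), ∑ a ∈ (range (l + 1)).filter (fun a => 2 * a ≤ j ∧ j - a ≤ l),
        f j a := by
  rw [sum_sigma', sum_sigma']
  refine sum_nbij' (fun p => ⟨p.1 + p.2, p.2⟩) (fun p => ⟨p.1 - p.2, p.2⟩) ?_ ?_ ?_ ?_ ?_ <;>
    rintro ⟨m, a⟩ h <;> simp only [mem_sigma, mem_range, mem_filter] at h ⊢
  · omega
  · omega
  · rw [Nat.add_sub_cancel]
  · rw [Nat.sub_add_cancel (by omega)]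

lemma cast_choose_mul_choose_mul_factorial_div {K : Type*} [Field K] [CharZero K] {a m l : ℕ}
    (ham : a ≤ m) (hml : m ≤ l) (P : K) (hP : P ≠ 0) :
    (m.choose a * l.choose m : K) * ((m - a).factorial / P) =
      l.factorial / (a.factorial * P * (l - m).factorial) := by
  rw [Nat.cast_choose K ham, Nat.cast_choose K hml]
  have := m.factorial_ne_zero
  have := (m - a).factorial_ne_zero
  field_simp

lemma trinomial_term_eq_sum_finsuppAntidiag {ι : Type*} [Fintype ι] [DecidableEq ι]
    (x y : EuclideanSpace ℝ ι) {a m l : ℕ} (ham : a ≤ m) (hml : m ≤ l) :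
    (‖x‖ ^ 2) ^ a * (-(2 * inner ℝ x y)) ^ (m - a) * (‖y‖ ^ 2) ^ (l - m) *
        (m.choose a * l.choose m) =
      (-1) ^ (m + a) * ((2 : ℝ) ^ (m - a) * ∑ β ∈ finsuppAntidiag univ (m - a),
        (l.factorial / (a.factorial * (β.prod fun _ e => e.factorial : ℕ) * (l - m).factorial)) *
          ‖x‖ ^ (2 * a) * (∏ i, x i ^ β i) * ‖y‖ ^ (2 * (l - m)) * ∏ i, y i ^ β i) := by
  have hsign : (-1 : ℝ) ^ (m + a) = (-1) ^ (m - a) := by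
    rw [show m + a = m - a + 2 * a by omega, pow_add, pow_mul, neg_one_sq, one_pow, mul_one]
  rw [hsign, neg_pow, mul_pow, real_inner_pow_eq_sum_finsuppAntidiag]
  simp only [mul_sum, sum_mul]
  refine sum_congr rfl fun β _ => ?_
  have hβ : ((β.prod fun _ e => e.factorial : ℕ) : ℝ) ≠ 0 :=
    Nat.cast_ne_zero.2 <| Finset.prod_ne_zero_iff.2 fun _ _ => Nat.factorial_ne_zero _
  rw [← cast_choose_mul_choose_mul_factorial_div ham hml _ hβ]
  ring

/-- Rearranged multinomial expansion of `‖x−y‖^(2ℓ)`, grouped by the degree `j = 2a + |β|`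
in `x`: each term is `(−1)^j 2^b (ℓ!/(a!β!c!)) ‖x‖^(2a) x^β ‖y‖^(2c) y^β` with `b = j − 2a`
and `c = ℓ − a − b = ℓ − (j − a)` (the factor `‖x‖^(2(j−ℓ))` combined with
`p_{c,β}(x) = ‖x‖^(2c) x^β` gives `‖x‖^(2a) x^β`). -/
theorem norm_sub_pow_eq_sum_by_x_degree (d l : ℕ) (x y : EuclideanSpace ℝ (Fin d)) :
    ‖x - y‖ ^ (2 * l) =
      ∑ j ∈ range (2 * l + 1), (-1 : ℝ) ^ j *
        ∑ a ∈ (range (l + 1)).filter (fun a => 2 * a ≤ j ∧ j - a ≤ l),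
          (2 : ℝ) ^ (j - 2 * a) *
            ∑ β ∈ finsuppAntidiag (univ : Finset (Fin d)) (j - 2 * a),
              ((l.factorial : ℝ) /
                  (a.factorial * (β.prod fun _ e => e.factorial) * (l - (j - a)).factorial)) *
                ‖x‖ ^ (2 * a) * (∏ i, x i ^ β i) *
                ‖y‖ ^ (2 * (l - (j - a))) * ∏ i, y i ^ β i := by
  conv_rhs => enter [2, j]; rw [mul_sum]
  rw [← sum_range_sum_range_add_eq_sum_filter, pow_mul, norm_sub_sq_real, sub_eq_add_neg,
    add_add_pow_eq_sum_choose_mul_choose]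
  refine sum_congr rfl fun m hm => sum_congr rfl fun a ha => ?_
  rw [mem_range] at hm ha
  rw [show m + a - 2 * a = m - a by omega, show l - (m + a - a) = l - m by omega]
  exact trinomial_term_eq_sum_finsuppAntidiag x y (by omega) (by omega)
end
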